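/- Let σ be a weight on ℝ^d, Q₀ a dyadic cube, and 𝒮 a sparse collection of dyadic cubes all contained in Q₀. Then Σ_{S∈𝒮} σ(S) ≤ 2 ∫_{Q₀} M(σ 1_{Q₀})(x) dx. More generally, for every Q ∈ 𝒮, Σ_{S∈𝒮, S⊆Q} σ(S) ≤ 2 ∫_{Q} M(σ 1_{Q})(x) dx. -/

import Mathlib

open MeasureTheory Set ENNReal

noncomputable section

/-- A (half-open, axis-parallel) cube in `ℝ^d`, with corner `c` and side length `l > 0`. -/
def IsCube {d : ℕ} (Q : Set (EuclideanSpace ℝ (Fin d))) : Prop :=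
  ∃ (c : Fin d → ℝ) (l : ℝ), 0 < l ∧ Q = {x | ∀ i, c i ≤ x i ∧ x i < c i + l}

/-- A dyadic cube `∏_i [n_i 2^k, (n_i+1) 2^k)` in `ℝ^d`. -/
def IsDyadicCube {d : ℕ} (Q : Set (EuclideanSpace ℝ (Fin d))) : Prop :=
  ∃ (k : ℤ) (n : Fin d → ℤ),
    Q = {x | ∀ i, (n i : ℝ) * 2 ^ k ≤ x i ∧ x i < ((n i : ℝ) + 1) * 2 ^ k}

/-- A weight: a nonnegative locally integrable function on `ℝ^d`. -/
def IsWeight {d : ℕ} (σ : EuclideanSpace ℝ (Fin d) → ℝ) : Prop :=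
  (∀ x, 0 ≤ σ x) ∧ LocallyIntegrable σ volume

/-- `σ(Q) = ∫_Q σ dx`, as an extended nonnegative real. -/
def wt {d : ℕ} (σ : EuclideanSpace ℝ (Fin d) → ℝ) (Q : Set (EuclideanSpace ℝ (Fin d))) : ℝ≥0∞ :=
  ∫⁻ x in Q, ENNReal.ofReal (σ x)

/-- The average `⟨σ⟩_Q = σ(Q)/|Q|`. -/
def avg {d : ℕ} (σ : EuclideanSpace ℝ (Fin d) → ℝ) (Q : Set (EuclideanSpace ℝ (Fin d))) : ℝ≥0∞ :=
  wt σ Q / volume Q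

/-- The Hardy–Littlewood maximal function `M f (x) = sup_{Q ∋ x} ⟨|f|⟩_Q`, sup over cubes. -/
def maximal {d : ℕ} (f : EuclideanSpace ℝ (Fin d) → ℝ) (x : EuclideanSpace ℝ (Fin d)) : ℝ≥0∞ :=
  ⨆ (Q : Set (EuclideanSpace ℝ (Fin d))) (_ : IsCube Q) (_ : x ∈ Q),
    (∫⁻ y in Q, (‖f y‖₊ : ℝ≥0∞)) / volume Q

/-- `ρ_σ(Q) = (∫_Q M(σ 1_Q) dx) / σ(Q)`. -/
def rho {d : ℕ} (σ : EuclideanSpace ℝ (Fin d) → ℝ) (Q : Set (EuclideanSpace ℝ (Fin d))) : ℝ≥0∞ :=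
  (∫⁻ x in Q, maximal (Q.indicator σ) x) / wt σ Q

/-- `ρ_{σ,ε}(Q) = ρ_σ(Q) · ε(ρ_σ(Q))`. -/
def rhoE {d : ℕ} (σ : EuclideanSpace ℝ (Fin d) → ℝ) (ε : ℝ → ℝ)
    (Q : Set (EuclideanSpace ℝ (Fin d))) : ℝ≥0∞ :=
  rho σ Q * ENNReal.ofReal (ε (rho σ Q).toReal)

/-- The measure `w dx`. -/
def wMeasure {d : ℕ} (w : EuclideanSpace ℝ (Fin d) → ℝ) : Measure (EuclideanSpace ℝ (Fin d)) :=
  volume.withDensity fun x => ENNReal.ofReal (w x)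

/-- A sparse collection of dyadic cubes: for each `Q` in the collection, the union of the
members strictly contained in `Q` has measure at most `|Q|/2`. -/
def IsSparse {d : ℕ} (𝒮 : Set (Set (EuclideanSpace ℝ (Fin d)))) : Prop :=
  (∀ Q ∈ 𝒮, IsDyadicCube Q) ∧
    ∀ Q ∈ 𝒮, volume (⋃₀ {Q' | Q' ∈ 𝒮 ∧ Q' ⊂ Q}) ≤ volume Q / 2

/-!
For `S ∈ 𝒮` let `E_S` be `S` minus the union of the members of `𝒮` strictly inside `S`.
Sparseness gives `|E_S| ≥ |S|/2`, and since two dyadic cubes are nested or disjoint, the sets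
`E_S` are pairwise disjoint. On `E_S ⊆ S ⊆ Q` the maximal function `M(σ 1_Q)` is at least
`⟨σ⟩_S`, so `σ(S) ≤ 2 ∫_{E_S} M(σ 1_Q)`; summing over the disjoint `E_S ⊆ Q` gives the bound.
-/

section SparsePacking

variable {α : Type*} {𝒮 : Set (Set α)}

def sparseRemainder (𝒮 : Set (Set α)) (S : Set α) : Set α :=
  S \ ⋃₀ {S' | S' ∈ 𝒮 ∧ S' ⊂ S}

lemma pairwiseDisjoint_sparseRemainder
    (hnest : 𝒮.Pairwise fun S T => S ⊆ T ∨ T ⊆ S ∨ Disjoint S T) :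
    𝒮.PairwiseDisjoint (sparseRemainder 𝒮) := by
  have inner_disjoint : ∀ S ∈ 𝒮, ∀ T, S ⊂ T →
      Disjoint (sparseRemainder 𝒮 S) (sparseRemainder 𝒮 T) := by
    intro S hS T hST
    have hS_covered : S ⊆ ⋃₀ {S' | S' ∈ 𝒮 ∧ S' ⊂ T} := subset_sUnion_of_mem ⟨hS, hST⟩
    exact (disjoint_sdiff_right.mono_left hS_covered).mono_left sdiff_subset
  intro S hS T hT hST
  rcases hnest hS hT hST with h | h | h
  · exact inner_disjoint S hS T (h.ssubset_of_ne hST)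
  · exact (inner_disjoint T hT S (h.ssubset_of_ne hST.symm)).symm
  · exact h.mono sdiff_subset sdiff_subset

variable [MeasurableSpace α] {μ : Measure α}

lemma measure_div_two_le_measure_sparseRemainder {S : Set α} (hS : μ S ≠ ∞)
    (hsparse : μ (⋃₀ {S' | S' ∈ 𝒮 ∧ S' ⊂ S}) ≤ μ S / 2) :
    μ S / 2 ≤ μ (sparseRemainder 𝒮 S) :=
  calc μ S / 2 = μ S - μ S / 2 := (ENNReal.sub_half hS).symm
    _ ≤ μ S - μ (⋃₀ {S' | S' ∈ 𝒮 ∧ S' ⊂ S}) := tsub_le_tsub_left hsparse _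
    _ ≤ μ (sparseRemainder 𝒮 S) := le_measure_sdiff

lemma measurableSet_sparseRemainder (h𝒮 : 𝒮.Countable) (hmeas : ∀ S ∈ 𝒮, MeasurableSet S)
    {S : Set α} (hS : MeasurableSet S) : MeasurableSet (sparseRemainder 𝒮 S) :=
  hS.diff <| .sUnion (h𝒮.mono fun _ h => h.1) fun _ h => hmeas _ h.1

lemma le_two_mul_setLIntegral_of_div_le {S E : Set α} (hE : MeasurableSet E) (hS₀ : μ S ≠ 0)
    (hS : μ S ≠ ∞) (hSE : μ S / 2 ≤ μ E) {a : ℝ≥0∞} {g : α → ℝ≥0∞}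
    (hg : ∀ x ∈ E, a / μ S ≤ g x) : a ≤ 2 * ∫⁻ x in E, g x ∂μ :=
  calc a = 2 * (a / μ S * (μ S / 2)) := by
        rw [← mul_div_assoc, ENNReal.div_mul_cancel hS₀ hS,
          ENNReal.mul_div_cancel two_ne_zero ofNat_ne_top]
    _ ≤ 2 * (a / μ S * μ E) := by gcongr
    _ = 2 * ∫⁻ _ in E, a / μ S ∂μ := by rw [setLIntegral_const]
    _ ≤ 2 * ∫⁻ x in E, g x ∂μ := by
        gcongr 2 * ?_
        exact setLIntegral_mono' hE hg

theorem tsum_le_two_mul_setLIntegral_of_sparse (h𝒮 : 𝒮.Countable)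
    (hmeas : ∀ S ∈ 𝒮, MeasurableSet S)
    (hnest : 𝒮.Pairwise fun S T => S ⊆ T ∨ T ⊆ S ∨ Disjoint S T)
    (hsparse : ∀ S ∈ 𝒮, μ (⋃₀ {S' | S' ∈ 𝒮 ∧ S' ⊂ S}) ≤ μ S / 2)
    (h₀ : ∀ S ∈ 𝒮, μ S ≠ 0) (htop : ∀ S ∈ 𝒮, μ S ≠ ∞) {Q : Set α} (hQ : ∀ S ∈ 𝒮, S ⊆ Q)
    (a : Set α → ℝ≥0∞) (g : α → ℝ≥0∞) (hg : ∀ S ∈ 𝒮, ∀ x ∈ S, a S / μ S ≤ g x) :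
    ∑' S : 𝒮, a S ≤ 2 * ∫⁻ x in Q, g x ∂μ :=
  have hE : ∀ S ∈ 𝒮, MeasurableSet (sparseRemainder 𝒮 S) := fun S hS =>
    measurableSet_sparseRemainder h𝒮 hmeas (hmeas S hS)
  calc ∑' S : 𝒮, a S ≤ ∑' S : 𝒮, 2 * ∫⁻ x in sparseRemainder 𝒮 S, g x ∂μ :=
        ENNReal.tsum_le_tsum fun ⟨S, hS⟩ =>
          le_two_mul_setLIntegral_of_div_le (hE S hS) (h₀ S hS) (htop S hS)
            (measure_div_two_le_measure_sparseRemainder (htop S hS) (hsparse S hS))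
            fun x hx => hg S hS x hx.1
    _ = 2 * ∫⁻ x in ⋃ S ∈ 𝒮, sparseRemainder 𝒮 S, g x ∂μ := by
        rw [ENNReal.tsum_mul_left,
          lintegral_biUnion h𝒮 hE (pairwiseDisjoint_sparseRemainder hnest)]
    _ ≤ 2 * ∫⁻ x in Q, g x ∂μ := by
        gcongr
        exact iUnion₂_subset fun S hS => sdiff_subset.trans (hQ S hS)

end SparsePacking

section Cubes

variable {d : ℕ}

lemma box_eq_preimage_pi (a b : Fin d → ℝ) :
    {x : EuclideanSpace ℝ (Fin d) | ∀ i, a i ≤ x i ∧ x i < b i} =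
      WithLp.ofLp ⁻¹' univ.pi fun i => Ico (a i) (b i) := by
  ext x
  simp

lemma measurableSet_box (a b : Fin d → ℝ) :
    MeasurableSet {x : EuclideanSpace ℝ (Fin d) | ∀ i, a i ≤ x i ∧ x i < b i} := by
  rw [box_eq_preimage_pi]
  exact (PiLp.volume_preserving_ofLp _).measurable (.univ_pi fun _ => measurableSet_Ico)

lemma volume_cube (c : Fin d → ℝ) (l : ℝ) :
    volume {x : EuclideanSpace ℝ (Fin d) | ∀ i, c i ≤ x i ∧ x i < c i + l} =
      ENNReal.ofReal l ^ d := by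
  rw [box_eq_preimage_pi, (PiLp.volume_preserving_ofLp _).measure_preimage
    (MeasurableSet.univ_pi fun _ => measurableSet_Ico).nullMeasurableSet, volume_pi_pi]
  simp [Real.volume_Ico]

lemma IsCube.measurableSet {Q : Set (EuclideanSpace ℝ (Fin d))} (hQ : IsCube Q) :
    MeasurableSet Q := by
  obtain ⟨c, l, -, rfl⟩ := hQ
  exact measurableSet_box _ _

lemma IsCube.volume_ne_zero {Q : Set (EuclideanSpace ℝ (Fin d))} (hQ : IsCube Q) :
    volume Q ≠ 0 := by
  obtain ⟨c, l, hl, rfl⟩ := hQ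
  rw [volume_cube]
  exact pow_ne_zero _ (ENNReal.ofReal_pos.2 hl).ne'

lemma IsCube.volume_ne_top {Q : Set (EuclideanSpace ℝ (Fin d))} (hQ : IsCube Q) :
    volume Q ≠ ∞ := by
  obtain ⟨c, l, -, rfl⟩ := hQ
  rw [volume_cube]
  exact pow_ne_top ofReal_ne_top

lemma IsDyadicCube.isCube {Q : Set (EuclideanSpace ℝ (Fin d))} (hQ : IsDyadicCube Q) :
    IsCube Q := by
  obtain ⟨k, n, rfl⟩ := hQ
  refine ⟨fun i => n i * 2 ^ k, 2 ^ k, zpow_pos two_pos k, ?_⟩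
  simp only [add_mul, one_mul]

end Cubes

section Dyadic

variable {d : ℕ}

lemma mem_Ico_dyadic_iff_floor_eq (k n : ℤ) (x : ℝ) :
    (n : ℝ) * 2 ^ k ≤ x ∧ x < ((n : ℝ) + 1) * 2 ^ k ↔ ⌊x / 2 ^ k⌋ = n := by
  have h2k : (0 : ℝ) < 2 ^ k := zpow_pos two_pos k
  rw [Int.floor_eq_iff, le_div_iff₀ h2k, div_lt_iff₀ h2k]

lemma floor_div_two_zpow_eq_of_le {k₁ k₂ : ℤ} (hk : k₁ ≤ k₂) {x y : ℝ}
    (h : ⌊x / 2 ^ k₁⌋ = ⌊y / 2 ^ k₁⌋) : ⌊x / 2 ^ k₂⌋ = ⌊y / 2 ^ k₂⌋ := by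
  obtain ⟨m, rfl⟩ : ∃ m : ℕ, k₂ = k₁ + m := ⟨(k₂ - k₁).toNat, by omega⟩
  have hdiv : ∀ z : ℝ, z / 2 ^ (k₁ + m) = z / 2 ^ k₁ / ((2 ^ m : ℕ) : ℝ) := fun z => by
    rw [zpow_add₀ two_ne_zero, zpow_natCast, div_div, Nat.cast_pow, Nat.cast_ofNat]
  rw [hdiv, hdiv, Int.floor_div_natCast, Int.floor_div_natCast, h]

def dyadicCube (k : ℤ) (n : Fin d → ℤ) : Set (EuclideanSpace ℝ (Fin d)) :=
  {x | ∀ i, ⌊x i / 2 ^ k⌋ = n i}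

lemma isDyadicCube_iff {Q : Set (EuclideanSpace ℝ (Fin d))} :
    IsDyadicCube Q ↔ ∃ k n, Q = dyadicCube k n := by
  simp only [IsDyadicCube, dyadicCube, mem_Ico_dyadic_iff_floor_eq]

lemma dyadicCube_subset_of_le {k₁ k₂ : ℤ} (hk : k₁ ≤ k₂) {n₁ n₂ : Fin d → ℤ}
    (h : ¬Disjoint (dyadicCube k₁ n₁) (dyadicCube k₂ n₂)) :
    dyadicCube k₁ n₁ ⊆ dyadicCube k₂ n₂ := by
  obtain ⟨x, hx₁, hx₂⟩ := not_disjoint_iff.1 h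
  intro y hy i
  rw [← hx₂ i]
  exact floor_div_two_zpow_eq_of_le hk ((hy i).trans (hx₁ i).symm)

lemma IsDyadicCube.subset_or_subset_or_disjoint {Q₁ Q₂ : Set (EuclideanSpace ℝ (Fin d))}
    (h₁ : IsDyadicCube Q₁) (h₂ : IsDyadicCube Q₂) : Q₁ ⊆ Q₂ ∨ Q₂ ⊆ Q₁ ∨ Disjoint Q₁ Q₂ := by
  obtain ⟨k₁, n₁, rfl⟩ := isDyadicCube_iff.1 h₁
  obtain ⟨k₂, n₂, rfl⟩ := isDyadicCube_iff.1 h₂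
  by_cases hd : Disjoint (dyadicCube k₁ n₁) (dyadicCube k₂ n₂)
  · exact .inr (.inr hd)
  rcases le_total k₁ k₂ with hk | hk
  · exact .inl (dyadicCube_subset_of_le hk hd)
  · exact .inr (.inl (dyadicCube_subset_of_le hk fun h => hd h.symm))

lemma countable_setOf_isDyadicCube :
    {Q : Set (EuclideanSpace ℝ (Fin d)) | IsDyadicCube Q}.Countable :=
  (countable_range fun p : ℤ × (Fin d → ℤ) => dyadicCube p.1 p.2).mono fun Q hQ => by
    obtain ⟨k, n, rfl⟩ := isDyadicCube_iff.1 hQ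
    exact ⟨(k, n), rfl⟩

lemma IsSparse.mono {𝒮 𝒯 : Set (Set (EuclideanSpace ℝ (Fin d)))} (h𝒮 : IsSparse 𝒮)
    (h𝒯 : 𝒯 ⊆ 𝒮) : IsSparse 𝒯 :=
  ⟨fun Q hQ => h𝒮.1 Q (h𝒯 hQ), fun Q hQ =>
    (measure_mono (sUnion_mono fun _ h => And.imp_left (@h𝒯 _) h)).trans (h𝒮.2 Q (h𝒯 hQ))⟩

lemma wt_div_volume_le_maximal {σ : EuclideanSpace ℝ (Fin d) → ℝ}
    {Q S : Set (EuclideanSpace ℝ (Fin d))} (hS : IsCube S) (hSQ : S ⊆ Q)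
    {x : EuclideanSpace ℝ (Fin d)} (hx : x ∈ S) :
    wt σ S / volume S ≤ maximal (Q.indicator σ) x :=
  calc wt σ S / volume S ≤ (∫⁻ y in S, (‖Q.indicator σ y‖₊ : ℝ≥0∞)) / volume S := by
        gcongr
        refine setLIntegral_mono' hS.measurableSet fun y hy => ?_
        rw [indicator_of_mem (hSQ hy)]
        exact Real.ofReal_le_enorm _
    _ ≤ maximal (Q.indicator σ) x := le_iSup₂_of_le S hS (le_iSup_of_le hx le_rfl)

theorem IsSparse.tsum_wt_le_two_mul_setLIntegral_maximal
    {𝒮 : Set (Set (EuclideanSpace ℝ (Fin d)))} (h𝒮 : IsSparse 𝒮) (σ : EuclideanSpace ℝ (Fin d) → ℝ)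
    {Q : Set (EuclideanSpace ℝ (Fin d))} (hQ : ∀ S ∈ 𝒮, S ⊆ Q) :
    ∑' S : 𝒮, wt σ S ≤ 2 * ∫⁻ x in Q, maximal (Q.indicator σ) x :=
  have hcube : ∀ S ∈ 𝒮, IsCube S := fun S hS => (h𝒮.1 S hS).isCube
  tsum_le_two_mul_setLIntegral_of_sparse (countable_setOf_isDyadicCube.mono h𝒮.1)
    (fun S hS => (hcube S hS).measurableSet)
    (fun S hS T hT _ => (h𝒮.1 S hS).subset_or_subset_or_disjoint (h𝒮.1 T hT)) h𝒮.2
    (fun S hS => (hcube S hS).volume_ne_zero) (fun S hS => (hcube S hS).volume_ne_top) hQ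
    (wt σ) (maximal (Q.indicator σ)) fun S hS _ hx =>
      wt_div_volume_le_maximal (hcube S hS) (hQ S hS) hx

end Dyadic

theorem sparse_carleson_maximal_general (d : ℕ) (σ : EuclideanSpace ℝ (Fin d) → ℝ)
    (Q₀ : Set (EuclideanSpace ℝ (Fin d)))
    (𝒮 : Set (Set (EuclideanSpace ℝ (Fin d)))) (h𝒮 : IsSparse 𝒮)
    (hsub : ∀ S ∈ 𝒮, S ⊆ Q₀) :
    (∑' S : 𝒮, wt σ (S : Set (EuclideanSpace ℝ (Fin d)))) ≤
        2 * ∫⁻ x in Q₀, maximal (Q₀.indicator σ) x ∧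
      ∀ Q ∈ 𝒮,
        (∑' S : {S | S ∈ 𝒮 ∧ S ⊆ Q}, wt σ (S : Set (EuclideanSpace ℝ (Fin d)))) ≤
          2 * ∫⁻ x in Q, maximal (Q.indicator σ) x :=
  ⟨h𝒮.tsum_wt_le_two_mul_setLIntegral_maximal σ hsub, fun _ _ =>
    (h𝒮.mono fun _ h => h.1).tsum_wt_le_two_mul_setLIntegral_maximal σ fun _ h => h.2⟩

/-- **Theorem (Carleson property of sparse collections).**
If `𝒮` is a sparse collection of dyadic cubes contained in a dyadic cube `Q₀`, then
`Σ_{S ∈ 𝒮} σ(S) ≤ 2 ∫_{Q₀} M(σ 1_{Q₀}) dx`, and more generally, for every `Q ∈ 𝒮`,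
`Σ_{S ∈ 𝒮, S ⊆ Q} σ(S) ≤ 2 ∫_Q M(σ 1_Q) dx`. -/
theorem sparse_carleson_maximal (d : ℕ) (σ : EuclideanSpace ℝ (Fin d) → ℝ)
    (hσ : IsWeight σ) (Q₀ : Set (EuclideanSpace ℝ (Fin d))) (hQ₀ : IsDyadicCube Q₀)
    (𝒮 : Set (Set (EuclideanSpace ℝ (Fin d)))) (h𝒮 : IsSparse 𝒮)
    (hsub : ∀ S ∈ 𝒮, S ⊆ Q₀) :
    (∑' S : 𝒮, wt σ (S : Set (EuclideanSpace ℝ (Fin d)))) ≤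
        2 * ∫⁻ x in Q₀, maximal (Q₀.indicator σ) x ∧
      ∀ Q ∈ 𝒮,
        (∑' S : {S | S ∈ 𝒮 ∧ S ⊆ Q}, wt σ (S : Set (EuclideanSpace ℝ (Fin d)))) ≤
          2 * ∫⁻ x in Q, maximal (Q.indicator σ) x :=
  sparse_carleson_maximal_general d σ Q₀ 𝒮 h𝒮 hsub
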